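/- arXiv:1511.05917 — 4 statements merged into one kernel-verified Lean document; each statement's English description precedes it below -/
import Mathlib

section
/- Let A, B, M, M̄ be n×n real matrices with A, B symmetric positive definite, M symmetric positive definite, M̄ diagonal positive definite, and suppose A = B. Assume there is a constant C₁ ∈ (0,1) with C₁(M̄u,u) ≤ (Mu,u) ≤ (M̄u,u) for all u. Let τ > 0 and X = (I + τ² M̄⁻¹ A M⁻¹ A)⁻¹ (M̄⁻¹M − I). Then every eigenvalue λ of X is real and satisfies C₁ − 1 < λ ≤ 0. -/
/-!
With `S = M̄ + τ² A M⁻¹ A` and `N = M - M̄` one has `S X = N`, so an eigenpair `X v = λ v` solves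
the generalized problem `N v = λ S v`, and `λ = (v* N v) / (v* S v)` with `S` positive definite.
Hence `c • S - N ⪰ 0` gives `λ ≤ c` and `N - c • S ≻ 0` gives `c < λ` in the order of `ℂ`, where
`λ ≤ 0` already forces `λ` to be real. The two comparisons are `0 • S - N = M̄ - M ⪰ 0` and
`N - (C₁ - 1) S = (M - C₁ M̄) + (1 - C₁) τ² A M⁻¹ A ≻ 0`.
-/

open Matrix
open scoped ComplexOrder MatrixOrder

namespace Matrix

variable {ι : Type*} [Fintype ι]

lemma PosDef.mul_inv_mul_self {𝕜 : Type*} [RCLike 𝕜] [DecidableEq ι] {A M : Matrix ι ι 𝕜}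
    (hA : A.PosDef) (hM : M.PosDef) : (A * M⁻¹ * A).PosDef := by
  simpa only [hA.isHermitian.eq] using
    hM.inv.conjTranspose_mul_mul_same (mulVec_injective_iff_isUnit.mpr hA.isUnit)

lemma add_mul_one_add_inv_mul_inv_mul_sub_one {K : Type*} [Field K] [DecidableEq ι]
    {D E F : Matrix ι ι K} (hD : IsUnit D) (hDE : IsUnit (D + E)) :
    (D + E) * ((1 + D⁻¹ * E)⁻¹ * (D⁻¹ * F - 1)) = F - D := by
  have hD' : IsUnit D.det := (isUnit_iff_isUnit_det D).mp hD
  have hfactor : D + E = D * (1 + D⁻¹ * E) := by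
    rw [mul_add, mul_one, mul_nonsing_inv_cancel_left D E hD']
  have hP : IsUnit (1 + D⁻¹ * E) := isUnit_of_mul_isUnit_right (hfactor ▸ hDE)
  rw [hfactor, mul_assoc, mul_nonsing_inv_cancel_left _ _ ((isUnit_iff_isUnit_det _).mp hP),
    mul_sub, mul_nonsing_inv_cancel_left D F hD', mul_one]

lemma posSemidef_sub_of_forall_mulVec_dotProduct_le {P Q : Matrix ι ι ℝ} (hP : P.IsHermitian)
    (hQ : Q.IsHermitian) (h : ∀ u, P *ᵥ u ⬝ᵥ u ≤ Q *ᵥ u ⬝ᵥ u) : (Q - P).PosSemidef := by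
  refine .of_dotProduct_mulVec_nonneg (hQ.sub hP) fun u => ?_
  rw [star_trivial, sub_mulVec, dotProduct_sub, sub_nonneg, dotProduct_comm, dotProduct_comm u]
  exact h u

lemma exists_mulVec_eq_smul_of_mem_spectrum {K : Type*} [Field K] [DecidableEq ι]
    {A : Matrix ι ι K} {z : K} (hz : z ∈ spectrum K A) : ∃ v ≠ 0, A *ᵥ v = z • v := by
  rw [← spectrum_toLin', ← Module.End.hasEigenvalue_iff_mem_spectrum] at hz
  obtain ⟨v, hv⟩ := hz.exists_hasEigenvector
  exact ⟨v, hv.2, hv.apply_eq_smul⟩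

section GeneralizedEigenvalue

variable {𝕜 : Type*} [RCLike 𝕜] {S N : Matrix ι ι 𝕜} {v : ι → 𝕜} {z : 𝕜}

lemma star_dotProduct_sub_smul_mulVec (hz : N *ᵥ v = z • S *ᵥ v) (c : 𝕜) :
    star v ⬝ᵥ (N - c • S) *ᵥ v = (z - c) * (star v ⬝ᵥ S *ᵥ v) := by
  rw [sub_mulVec, hz, smul_mulVec, ← sub_smul, dotProduct_smul, smul_eq_mul]

lemma PosDef.lt_of_mulVec_eq_smul_mulVec (hS : S.PosDef) (hv : v ≠ 0)
    (hz : N *ᵥ v = z • S *ᵥ v) {c : 𝕜} (hc : (N - c • S).PosDef) : c < z := by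
  have hpos := hc.dotProduct_mulVec_pos hv
  rw [star_dotProduct_sub_smul_mulVec hz] at hpos
  have := div_pos hpos (hS.dotProduct_mulVec_pos hv)
  rwa [mul_div_cancel_right₀ _ (hS.dotProduct_mulVec_pos hv).ne', sub_pos] at this

lemma PosDef.le_of_mulVec_eq_smul_mulVec (hS : S.PosDef) (hv : v ≠ 0)
    (hz : N *ᵥ v = z • S *ᵥ v) {c : 𝕜} (hc : (c • S - N).PosSemidef) : z ≤ c := by
  have hnonneg := hc.dotProduct_mulVec_nonneg v
  rw [← neg_sub, neg_mulVec, dotProduct_neg, star_dotProduct_sub_smul_mulVec hz, ← neg_mul,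
    neg_sub] at hnonneg
  have := div_nonneg hnonneg (hS.dotProduct_mulVec_pos hv).le
  rwa [mul_div_cancel_right₀ _ (hS.dotProduct_mulVec_pos hv).ne', sub_nonneg] at this

end GeneralizedEigenvalue

section Complexification

lemma PosSemidef.map_ofReal {R : Matrix ι ι ℝ} (hR : R.PosSemidef) :
    (R.map ((↑) : ℝ → ℂ)).PosSemidef := by
  classical
  obtain ⟨B, rfl⟩ := CStarAlgebra.nonneg_iff_eq_star_mul_self.mp hR.nonneg
  change ((Bᴴ * B).map Complex.ofRealHom).PosSemidef
  rw [Matrix.map_mul, conjTranspose_map (⇑Complex.ofRealHom) fun _ => (Complex.conj_ofReal _).symm]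
  exact posSemidef_conjTranspose_mul_self _

lemma PosDef.map_ofReal [DecidableEq ι] {R : Matrix ι ι ℝ} (hR : R.PosDef) :
    (R.map ((↑) : ℝ → ℂ)).PosDef :=
  hR.posSemidef.map_ofReal.posDef_iff_isUnit.mpr (hR.isUnit.map Complex.ofRealHom.mapMatrix)

variable [DecidableEq ι] {S N X : Matrix ι ι ℝ} {z : ℂ}

lemma exists_map_ofReal_mulVec_eq_smul_mulVec (hSX : S * X = N)
    (hz : z ∈ spectrum ℂ (X.map ((↑) : ℝ → ℂ))) :
    ∃ v ≠ 0, N.map ((↑) : ℝ → ℂ) *ᵥ v = z • S.map ((↑) : ℝ → ℂ) *ᵥ v := by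
  obtain ⟨v, hv, hXv⟩ := exists_mulVec_eq_smul_of_mem_spectrum hz
  refine ⟨v, hv, ?_⟩
  rw [← hSX, ← mulVec_smul, ← hXv, mulVec_mulVec]
  exact congrArg (· *ᵥ v) (Matrix.map_mul (f := Complex.ofRealHom))

lemma PosDef.ofReal_lt_of_mem_spectrum (hS : S.PosDef) (hSX : S * X = N)
    (hz : z ∈ spectrum ℂ (X.map ((↑) : ℝ → ℂ))) {c : ℝ} (hc : (N - c • S).PosDef) :
    (c : ℂ) < z := by
  obtain ⟨v, hv, hNv⟩ := exists_map_ofReal_mulVec_eq_smul_mulVec hSX hz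
  refine hS.map_ofReal.lt_of_mulVec_eq_smul_mulVec hv hNv ?_
  have hmap : N.map ((↑) : ℝ → ℂ) - (c : ℂ) • S.map (↑) = (N - c • S).map (↑) := by ext; simp
  exact hmap ▸ hc.map_ofReal

lemma PosDef.le_ofReal_of_mem_spectrum (hS : S.PosDef) (hSX : S * X = N)
    (hz : z ∈ spectrum ℂ (X.map ((↑) : ℝ → ℂ))) {c : ℝ} (hc : (c • S - N).PosSemidef) :
    z ≤ c := by
  obtain ⟨v, hv, hNv⟩ := exists_map_ofReal_mulVec_eq_smul_mulVec hSX hz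
  refine hS.map_ofReal.le_of_mulVec_eq_smul_mulVec hv hNv ?_
  have hmap : (c : ℂ) • S.map ((↑) : ℝ → ℂ) - N.map (↑) = (c • S - N).map (↑) := by ext; simp
  exact hmap ▸ hc.map_ofReal

end Complexification

end Matrix

theorem stmt_4_general {n : ℕ} (A M Mbar : Matrix (Fin n) (Fin n) ℝ)
    (hA : A.PosDef)
    (hM : M.PosDef) (hMbar : Mbar.PosDef)
    (C₁ : ℝ) (hC₁ : C₁ ∈ Set.Ioo (0 : ℝ) 1)
    (hlow : ∀ u : Fin n → ℝ, C₁ * (Mbar.mulVec u ⬝ᵥ u) ≤ M.mulVec u ⬝ᵥ u)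
    (hup : ∀ u : Fin n → ℝ, M.mulVec u ⬝ᵥ u ≤ Mbar.mulVec u ⬝ᵥ u)
    (τ : ℝ) (hτ : 0 < τ)
    (X : Matrix (Fin n) (Fin n) ℝ)
    (hX : X = (1 + τ ^ 2 • (Mbar⁻¹ * A * M⁻¹ * A))⁻¹ * (Mbar⁻¹ * M - 1)) :
    ∀ z ∈ spectrum ℂ (X.map ((↑) : ℝ → ℂ)),
      z.im = 0 ∧ C₁ - 1 < z.re ∧ z.re ≤ 0 := by
  intro z hz
  set T := A * M⁻¹ * A
  set S := Mbar + τ ^ 2 • T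
  have hT : T.PosDef := hA.mul_inv_mul_self hM
  have hS : S.PosDef := hMbar.add (hT.smul (by positivity))
  have hSX : S * X = M - Mbar := by
    rw [hX, show τ ^ 2 • (Mbar⁻¹ * A * M⁻¹ * A) = Mbar⁻¹ * (τ ^ 2 • T) by
      simp only [T, Matrix.mul_smul, mul_assoc]]
    exact add_mul_one_add_inv_mul_inv_mul_sub_one hMbar.isUnit hS.isUnit
  have hupper : ((0 : ℝ) • S - (M - Mbar)).PosSemidef := by
    rw [zero_smul, zero_sub, neg_sub]
    exact posSemidef_sub_of_forall_mulVec_dotProduct_le hM.isHermitian hMbar.isHermitian hup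
  have hlower : (M - Mbar - (C₁ - 1) • S).PosDef := by
    have hMC₁ : (M - C₁ • Mbar).PosSemidef :=
      posSemidef_sub_of_forall_mulVec_dotProduct_le
        (hMbar.isHermitian.smul (IsSelfAdjoint.all C₁)) hM.isHermitian
        (by simpa only [smul_mulVec, smul_dotProduct, smul_eq_mul] using hlow)
    have hdecomp : M - Mbar - (C₁ - 1) • S = (M - C₁ • Mbar) + ((1 - C₁) * τ ^ 2) • T := by
      simp only [S]; module
    have hweight : 0 < (1 - C₁) * τ ^ 2 := mul_pos (sub_pos.mpr hC₁.2) (by positivity)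
    exact hdecomp ▸ PosDef.posSemidef_add hMC₁ (hT.smul hweight)
  obtain ⟨hre_le, him⟩ := Complex.le_def.mp (hS.le_ofReal_of_mem_spectrum hSX hz hupper)
  have hre_gt := (Complex.lt_def.mp (hS.ofReal_lt_of_mem_spectrum hSX hz hlower)).1
  exact ⟨by simpa using him, by simpa using hre_gt, by simpa using hre_le⟩

/-- Spectrum of `X = (I + τ²M̄⁻¹AM⁻¹A)⁻¹(M̄⁻¹M − I)` (case `A = B`): every
eigenvalue is real and lies in `(C₁ − 1, 0]`. -/
theorem stmt_4 {n : ℕ} (A B M Mbar : Matrix (Fin n) (Fin n) ℝ)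
    (hA : A.PosDef) (hB : B.PosDef) (hAB : A = B)
    (hM : M.PosDef) (hMbar : Mbar.PosDef) (hMbarDiag : Mbar.IsDiag)
    (C₁ : ℝ) (hC₁ : C₁ ∈ Set.Ioo (0 : ℝ) 1)
    (hlow : ∀ u : Fin n → ℝ, C₁ * (Mbar.mulVec u ⬝ᵥ u) ≤ M.mulVec u ⬝ᵥ u)
    (hup : ∀ u : Fin n → ℝ, M.mulVec u ⬝ᵥ u ≤ Mbar.mulVec u ⬝ᵥ u)
    (τ : ℝ) (hτ : 0 < τ)
    (X : Matrix (Fin n) (Fin n) ℝ)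
    (hX : X = (1 + τ ^ 2 • (Mbar⁻¹ * A * M⁻¹ * A))⁻¹ * (Mbar⁻¹ * M - 1)) :
    ∀ z ∈ spectrum ℂ (X.map ((↑) : ℝ → ℂ)),
      z.im = 0 ∧ C₁ - 1 < z.re ∧ z.re ≤ 0 :=
  stmt_4_general A M Mbar hA hM hMbar C₁ hC₁ hlow hup τ hτ X hX
end

section
/- Under the hypotheses of the previous statement (A = B, C₁(M̄u,u) ≤ (Mu,u) ≤ (M̄u,u) for all u with C₁ ∈ (0,1), τ > 0), every eigenvalue of the preconditioned matrix B̃⁻¹𝒜, where 𝒜 = [[τA, M],[M, −τB]] and B̃ = [[τA, M],[M̄, −τB]], lies in the real interval (C₁, 1]. -/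
/-!
Let `(x, y) ≠ 0` satisfy `𝒜 (x, y) = z B̃ (x, y)` with `z ≠ 1`. The first block rows of `𝒜` and
`B̃` coincide, so `τAx + My = 0`. Pairing the second block row with `x` and using this relation to
rewrite `x⋆(τA)y` as `-y⋆My` gives `x⋆Mx + y⋆My = z (x⋆M̄x + y⋆My)`; thus `z` is a quotient of
reals which the lumping bounds `C₁ M̄ ≤ M ≤ M̄` place in `(C₁, 1]`, strictly above `C₁` because
`y ≠ 0`. The same pairing applied to a kernel vector of `B̃` shows that `B̃` is invertible.
-/

open Matrix

theorem Complex.im_eq_zero_and_mem_Ioc_of_mul_eq {z : ℂ} {c r s t : ℝ} (hc : c < 1)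
    (hlow : c * s ≤ r) (hup : r ≤ s) (ht : 0 < t) (h : ((r + t : ℝ) : ℂ) = z * (s + t : ℝ)) :
    z.im = 0 ∧ c < z.re ∧ z.re ≤ 1 := by
  have hst : 0 < s + t := by nlinarith
  have hz : z = ((r + t) / (s + t) : ℝ) := by
    rw [Complex.ofReal_div, eq_div_iff (by exact_mod_cast hst.ne'), h]
  rw [hz, Complex.ofReal_im, Complex.ofReal_re, lt_div_iff₀ hst, div_le_one hst]
  refine ⟨rfl, ?_, by linarith⟩
  nlinarith

namespace Matrix

variable {ι : Type*}

theorem IsHermitian.map_ofReal {S : Matrix ι ι ℝ} (hS : S.IsHermitian) :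
    (S.map ((↑) : ℝ → ℂ)).IsHermitian :=
  hS.map _ fun r => by simp

variable [Fintype ι]

theorem exists_mulVec_eq_smul_mulVec_of_mem_spectrum_map_inv_mul [DecidableEq ι]
    {K L : Type*} [Field K] [Field L] (f : K →+* L) {P Q : Matrix ι ι K} (hQ : IsUnit Q.det)
    {z : L} (hz : z ∈ spectrum L ((Q⁻¹ * P).map f)) :
    ∃ v ≠ 0, P.map f *ᵥ v = z • (Q.map f *ᵥ v) := by
  rw [← spectrum_toLin', ← Module.End.hasEigenvalue_iff_mem_spectrum] at hz
  obtain ⟨v, hv⟩ := hz.exists_hasEigenvector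
  refine ⟨v, hv.2, ?_⟩
  have hQP : Q.map f * (Q⁻¹ * P).map f = P.map f := by
    rw [← Matrix.map_mul, ← mul_assoc, mul_nonsing_inv _ hQ, one_mul]
  rw [← hQP, ← mulVec_mulVec, ← toLin'_apply ((Q⁻¹ * P).map f), hv.apply_eq_smul, mulVec_smul]

theorem star_dotProduct_add_neg_mulVec {R : Type*} [CommRing R] [StarRing R]
    {P M : Matrix ι ι R} (hP : P.IsHermitian) (hM : M.IsHermitian) {x y : ι → R}
    (h : P *ᵥ x + M *ᵥ y = 0) (N : Matrix ι ι R) :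
    star x ⬝ᵥ (N *ᵥ x + -P *ᵥ y) = star x ⬝ᵥ (N *ᵥ x) + star y ⬝ᵥ (M *ᵥ y) := by
  have hPx : P *ᵥ x = -(M *ᵥ y) := eq_neg_of_add_eq_zero_left h
  have hswap : star x ⬝ᵥ (P *ᵥ y) = -(star y ⬝ᵥ (M *ᵥ y)) := by
    rw [dotProduct_mulVec, ← hP.eq, ← star_mulVec, hPx, star_neg, neg_dotProduct,
      star_mulVec, hM.eq, ← dotProduct_mulVec]
  rw [neg_mulVec, dotProduct_add, dotProduct_neg, hswap, neg_neg]

theorem isUnit_det_fromBlocks_neg [DecidableEq ι] {P M Mbar : Matrix ι ι ℝ}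
    (hP : P.IsHermitian) (hM : M.PosDef) (hMbar : Mbar.PosDef) :
    IsUnit (fromBlocks P M Mbar (-P)).det := by
  rw [isUnit_iff_ne_zero, Ne, ← exists_mulVec_eq_zero_iff]
  rintro ⟨v, hv0, hv⟩
  set x := v ∘ Sum.inl
  set y := v ∘ Sum.inr
  have h₁ : P *ᵥ x + M *ᵥ y = 0 := funext fun i => by
    simpa [fromBlocks_mulVec] using congrFun hv (Sum.inl i)
  have h₂ : Mbar *ᵥ x + -P *ᵥ y = 0 := funext fun i => by
    simpa [fromBlocks_mulVec] using congrFun hv (Sum.inr i)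
  have hsum : star x ⬝ᵥ (Mbar *ᵥ x) + star y ⬝ᵥ (M *ᵥ y) = 0 := by
    rw [← star_dotProduct_add_neg_mulVec hP hM.isHermitian h₁, h₂, dotProduct_zero]
  have hx : x = 0 := by
    by_contra hx
    linarith [hMbar.dotProduct_mulVec_pos hx, hM.posSemidef.dotProduct_mulVec_nonneg y]
  have hy : y = 0 := by
    by_contra hy
    linarith [hMbar.posSemidef.dotProduct_mulVec_nonneg x, hM.dotProduct_mulVec_pos hy]
  exact hv0 (funext (Sum.forall.2 ⟨congrFun hx, congrFun hy⟩))

def complexQuad (S : Matrix ι ι ℝ) (x : ι → ℂ) : ℝ :=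
  S *ᵥ (Complex.re ∘ x) ⬝ᵥ (Complex.re ∘ x) + S *ᵥ (Complex.im ∘ x) ⬝ᵥ (Complex.im ∘ x)

theorem IsHermitian.star_dotProduct_map_ofReal_mulVec {S : Matrix ι ι ℝ} (hS : S.IsHermitian)
    (x : ι → ℂ) : star x ⬝ᵥ (S.map (↑) *ᵥ x) = complexQuad S x := by
  have hsymm : S *ᵥ (Complex.im ∘ x) ⬝ᵥ (Complex.re ∘ x) =
      S *ᵥ (Complex.re ∘ x) ⬝ᵥ (Complex.im ∘ x) := by
    rw [dotProduct_comm, dotProduct_mulVec, ← mulVec_transpose,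
      ← conjTranspose_eq_transpose_of_trivial, hS.eq]
  simp only [dotProduct, mulVec, Function.comp_apply, Finset.sum_mul] at hsymm
  simp only [complexQuad, dotProduct, mulVec, Function.comp_apply, Finset.sum_mul, Finset.mul_sum,
    Pi.star_apply, Complex.star_def, map_apply]
  apply Complex.ext
  · simp only [Complex.re_sum, Complex.mul_re, Complex.mul_im, Complex.conj_re, Complex.conj_im,
      Complex.ofReal_re, Complex.ofReal_im, zero_mul, sub_zero, add_zero, ← Finset.sum_add_distrib]
    refine Finset.sum_congr rfl fun i _ => Finset.sum_congr rfl fun j _ => by ring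
  · simp only [Complex.im_sum, Complex.mul_im, Complex.mul_re, Complex.conj_re, Complex.conj_im,
      Complex.ofReal_re, Complex.ofReal_im, zero_mul, sub_zero, add_zero]
    rw [← sub_eq_zero.mpr hsymm, ← Finset.sum_sub_distrib]
    refine Finset.sum_congr rfl fun i _ => ?_
    rw [← Finset.sum_sub_distrib]
    exact Finset.sum_congr rfl fun j _ => by ring

theorem PosDef.complexQuad_pos {S : Matrix ι ι ℝ} (hS : S.PosDef) {x : ι → ℂ} (hx : x ≠ 0) :
    0 < complexQuad S x := by
  have hnonneg (u : ι → ℝ) : 0 ≤ S *ᵥ u ⬝ᵥ u := by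
    simpa [dotProduct_comm] using hS.posSemidef.dotProduct_mulVec_nonneg u
  have hpos {u : ι → ℝ} (hu : u ≠ 0) : 0 < S *ᵥ u ⬝ᵥ u := by
    simpa [dotProduct_comm] using hS.dotProduct_mulVec_pos hu
  have : Complex.re ∘ x ≠ 0 ∨ Complex.im ∘ x ≠ 0 := by
    contrapose! hx
    exact funext fun i => Complex.ext (congrFun hx.1 i) (congrFun hx.2 i)
  rcases this with h | h
  · exact add_pos_of_pos_of_nonneg (hpos h) (hnonneg _)
  · exact add_pos_of_nonneg_of_pos (hnonneg _) (hpos h)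

theorem complexQuad_le_complexQuad {S T : Matrix ι ι ℝ} {c : ℝ}
    (h : ∀ u : ι → ℝ, c * (S *ᵥ u ⬝ᵥ u) ≤ T *ᵥ u ⬝ᵥ u) (x : ι → ℂ) :
    c * complexQuad S x ≤ complexQuad T x := by
  rw [complexQuad, complexQuad, mul_add]
  exact add_le_add (h _) (h _)

theorem eigenvalue_mem_Ioc_of_fromBlocks_mulVec_eq_smul {P M Mbar : Matrix ι ι ℝ}
    (hP : P.PosDef) (hM : M.PosDef) (hMbar : Mbar.IsHermitian) {c : ℝ} (hc : c < 1)
    (hlow : ∀ u : ι → ℝ, c * (Mbar *ᵥ u ⬝ᵥ u) ≤ M *ᵥ u ⬝ᵥ u)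
    (hup : ∀ u : ι → ℝ, M *ᵥ u ⬝ᵥ u ≤ Mbar *ᵥ u ⬝ᵥ u) {z : ℂ} {v : ι ⊕ ι → ℂ} (hv : v ≠ 0)
    (h : (fromBlocks P M M (-P)).map (↑) *ᵥ v = z • ((fromBlocks P M Mbar (-P)).map (↑) *ᵥ v)) :
    z.im = 0 ∧ c < z.re ∧ z.re ≤ 1 := by
  by_cases hz : z = 1
  · simp [hz, hc]
  set x := v ∘ Sum.inl
  set y := v ∘ Sum.inr
  simp only [fromBlocks_map, Matrix.map_neg _ Complex.ofReal_neg] at h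
  have E₁ : P.map (↑) *ᵥ x + M.map (↑) *ᵥ y = z • (P.map (↑) *ᵥ x + M.map (↑) *ᵥ y) :=
    funext fun i => by simpa [fromBlocks_mulVec] using congrFun h (Sum.inl i)
  have E₂ : M.map (↑) *ᵥ x + -P.map (↑) *ᵥ y = z • (Mbar.map (↑) *ᵥ x + -P.map (↑) *ᵥ y) :=
    funext fun i => by simpa [fromBlocks_mulVec] using congrFun h (Sum.inr i)
  have hPxy : P.map (↑) *ᵥ x + M.map (↑) *ᵥ y = 0 := by
    have : (1 - z) • (P.map (↑) *ᵥ x + M.map (↑) *ᵥ y) = 0 := by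
      rw [sub_smul, one_smul, ← E₁, sub_self]
    exact (smul_eq_zero.1 this).resolve_left (sub_ne_zero.2 (Ne.symm hz))
  have hy : y ≠ 0 := by
    intro hy
    have hPx : P.map (↑) *ᵥ x = 0 := by simpa [hy] using hPxy
    have hx : x = 0 := by
      by_contra hx
      have := hP.isHermitian.star_dotProduct_map_ofReal_mulVec x
      rw [hPx, dotProduct_zero] at this
      exact (hP.complexQuad_pos hx).ne' (by exact_mod_cast this.symm)
    exact hv (funext (Sum.forall.2 ⟨congrFun hx, congrFun hy⟩))
  have hPc := hP.isHermitian.map_ofReal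
  have hMc := hM.isHermitian.map_ofReal
  have key := congrArg (star x ⬝ᵥ ·) E₂
  simp only [dotProduct_smul, smul_eq_mul, star_dotProduct_add_neg_mulVec hPc hMc hPxy,
    hM.isHermitian.star_dotProduct_map_ofReal_mulVec,
    hMbar.star_dotProduct_map_ofReal_mulVec] at key
  exact Complex.im_eq_zero_and_mem_Ioc_of_mul_eq hc (complexQuad_le_complexQuad hlow x)
    (by simpa using complexQuad_le_complexQuad (c := 1) (by simpa using hup) x)
    (hM.complexQuad_pos hy) (by push_cast; exact key)

end Matrix

theorem stmt_5_general {n : ℕ} (A B M Mbar : Matrix (Fin n) (Fin n) ℝ)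
    (hA : A.PosDef) (hAB : A = B)
    (hM : M.PosDef) (hMbar : Mbar.PosDef)
    (C₁ : ℝ) (hC₁ : C₁ ∈ Set.Ioo (0 : ℝ) 1)
    (hlow : ∀ u : Fin n → ℝ, C₁ * (Mbar.mulVec u ⬝ᵥ u) ≤ M.mulVec u ⬝ᵥ u)
    (hup : ∀ u : Fin n → ℝ, M.mulVec u ⬝ᵥ u ≤ Mbar.mulVec u ⬝ᵥ u)
    (τ : ℝ) (hτ : 0 < τ)
    (𝒜 Btilde : Matrix (Fin n ⊕ Fin n) (Fin n ⊕ Fin n) ℝ)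
    (h𝒜 : 𝒜 = Matrix.fromBlocks (τ • A) M M (-(τ • B)))
    (hBtilde : Btilde = Matrix.fromBlocks (τ • A) M Mbar (-(τ • B))) :
    ∀ z ∈ spectrum ℂ ((Btilde⁻¹ * 𝒜).map ((↑) : ℝ → ℂ)),
      z.im = 0 ∧ C₁ < z.re ∧ z.re ≤ 1 := by
  subst hAB h𝒜 hBtilde
  have hP : (τ • A).PosDef := hA.smul hτ
  intro z hz
  obtain ⟨v, hv, hAv⟩ := exists_mulVec_eq_smul_mulVec_of_mem_spectrum_map_inv_mul
    Complex.ofRealHom (isUnit_det_fromBlocks_neg hP.isHermitian hM hMbar) hz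
  exact eigenvalue_mem_Ioc_of_fromBlocks_mulVec_eq_smul hP hM hMbar.isHermitian hC₁.2 hlow hup
    hv hAv

/-- Spectrum of the one-sided mass-lumping preconditioned matrix `B̃⁻¹𝒜`
(case `A = B`) lies in the real interval `(C₁, 1]`. -/
theorem stmt_5 {n : ℕ} (A B M Mbar : Matrix (Fin n) (Fin n) ℝ)
    (hA : A.PosDef) (hB : B.PosDef) (hAB : A = B)
    (hM : M.PosDef) (hMbar : Mbar.PosDef) (hMbarDiag : Mbar.IsDiag)
    (C₁ : ℝ) (hC₁ : C₁ ∈ Set.Ioo (0 : ℝ) 1)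
    (hlow : ∀ u : Fin n → ℝ, C₁ * (Mbar.mulVec u ⬝ᵥ u) ≤ M.mulVec u ⬝ᵥ u)
    (hup : ∀ u : Fin n → ℝ, M.mulVec u ⬝ᵥ u ≤ Mbar.mulVec u ⬝ᵥ u)
    (τ : ℝ) (hτ : 0 < τ)
    (𝒜 Btilde : Matrix (Fin n ⊕ Fin n) (Fin n ⊕ Fin n) ℝ)
    (h𝒜 : 𝒜 = Matrix.fromBlocks (τ • A) M M (-(τ • B)))
    (hBtilde : Btilde = Matrix.fromBlocks (τ • A) M Mbar (-(τ • B))) :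
    ∀ z ∈ spectrum ℂ ((Btilde⁻¹ * 𝒜).map ((↑) : ℝ → ℂ)),
      z.im = 0 ∧ C₁ < z.re ∧ z.re ≤ 1 :=
  stmt_5_general A B M Mbar hA hAB hM hMbar C₁ hC₁ hlow hup τ hτ 𝒜 Btilde h𝒜 hBtilde
end

section
/- Let A, B, M, M̄ be symmetric positive semidefinite n×n real matrices with A, B positive definite, τ > 0, and set δM = M − M̄. Let (λ, (v,u)) with λ ∈ ℂ, (v,u) ∈ ℂ²ⁿ nonzero be an eigenpair of the generalized problem [[τA, M],[M, −τB]](v,u)ᵀ = λ[[τA, M̄],[M̄, −τB]](v,u)ᵀ. Then |λ − 1|² = 4|Im((δM)v, u)|² / (α² + 4|Im(M̄v, u)|²), where α = τ((Av,v) + (Bu,u)) and (·,·) denotes the sesquilinear pairing (Xv,u) = uᴴXv extended to complex vectors. -/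
/-!
Pair the first block row of the eigenvalue equation with `v` and the second with `u`. As
`A`, `B`, `M`, `M̄` are Hermitian, `(Av,v)` and `(Bu,u)` are real and `(Mu,v)` is the conjugate
of `(Mv,u)`, so the two scalar equations read `τa + conj P = λ (τa + conj Q)` and
`P - τb = λ (Q - τb)` with `P = (Mv,u)`, `Q = (M̄v,u)`. Subtracting them gives
`(λ - 1) (2i Im Q - α) = 2i Im (P - Q)`; take squared moduli, and `α > 0` by positive
definiteness.
-/

open Matrix
open scoped ComplexOrder

theorem Complex.norm_sub_one_sq_mul_eq {τ a b : ℝ} {P Q lam : ℂ}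
    (h₁ : τ * a + starRingEnd ℂ P = lam * (τ * a + starRingEnd ℂ Q))
    (h₂ : P - τ * b = lam * (Q - τ * b)) :
    ‖lam - 1‖ ^ 2 * ((τ * (a + b)) ^ 2 + 4 * Q.im ^ 2) = 4 * (P - Q).im ^ 2 := by
  have key : (lam - 1) * (2 * Q.im * I - τ * (a + b) : ℂ) = 2 * (P.im - Q.im) * I := by
    have hP := Complex.sub_conj P
    have hQ := Complex.sub_conj Q
    push_cast at hP hQ ⊢
    linear_combination h₁ - h₂ + hP - lam * hQ
  have hden : ‖(2 * Q.im * I - τ * (a + b) : ℂ)‖ ^ 2 = (τ * (a + b)) ^ 2 + 4 * Q.im ^ 2 := by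
    rw [Complex.sq_norm, Complex.normSq_apply]; simp; ring
  have hnum : ‖(2 * (P.im - Q.im) * I : ℂ)‖ ^ 2 = 4 * (P - Q).im ^ 2 := by
    rw [Complex.sq_norm, Complex.normSq_apply]; simp; ring
  rw [← hden, ← mul_pow, ← norm_mul, key, hnum]

namespace Matrix

variable {m : Type*}

lemma re_star_dotProduct_map_ofReal_mulVec [Fintype m] (A : Matrix m m ℝ) (x : m → ℂ) :
    (star x ⬝ᵥ A.map ((↑) : ℝ → ℂ) *ᵥ x).re
      = (fun i => (x i).re) ⬝ᵥ A *ᵥ (fun i => (x i).re)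
        + (fun i => (x i).im) ⬝ᵥ A *ᵥ (fun i => (x i).im) := by
  simp only [dotProduct, mulVec, map_apply, Finset.mul_sum, Complex.re_sum, Pi.star_apply,
    Complex.star_def, Complex.mul_re, Complex.conj_re, Complex.conj_im, Complex.ofReal_re,
    Complex.ofReal_im, Complex.mul_im, ← Finset.sum_add_distrib]
  exact Finset.sum_congr rfl fun i _ => Finset.sum_congr rfl fun j _ => by ring

lemma IsHermitian.map_ofReal_s8 {A : Matrix m m ℝ} (hA : A.IsHermitian) :
    (A.map ((↑) : ℝ → ℂ)).IsHermitian :=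
  hA.map _ fun r => (Complex.conj_ofReal r).symm

lemma PosDef.map_ofReal_s8 [Fintype m] {A : Matrix m m ℝ} (hA : A.PosDef) :
    (A.map ((↑) : ℝ → ℂ)).PosDef := by
  refine .of_dotProduct_mulVec_pos hA.isHermitian.map_ofReal_s8 fun x hx => Complex.pos_iff.mpr
    ⟨?_, (hA.isHermitian.map_ofReal_s8.im_star_dotProduct_mulVec_self x).symm⟩
  have hre_or_im : (fun i => (x i).re) ≠ 0 ∨ (fun i => (x i).im) ≠ 0 := by
    by_contra! h
    exact hx (funext fun i => Complex.ext (congrFun h.1 i) (congrFun h.2 i))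
  have hre : 0 ≤ (fun i => (x i).re) ⬝ᵥ A *ᵥ (fun i => (x i).re) := by
    simpa using hA.posSemidef.dotProduct_mulVec_nonneg _
  have him : 0 ≤ (fun i => (x i).im) ⬝ᵥ A *ᵥ (fun i => (x i).im) := by
    simpa using hA.posSemidef.dotProduct_mulVec_nonneg _
  rw [re_star_dotProduct_map_ofReal_mulVec]
  rcases hre_or_im with h | h
  · exact add_pos_of_pos_of_nonneg (by simpa using hA.dotProduct_mulVec_pos h) him
  · exact add_pos_of_nonneg_of_pos hre (by simpa using hA.dotProduct_mulVec_pos h)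

lemma fromBlocks_map_ofReal {τ : ℝ} (A B X : Matrix m m ℝ) :
    (fromBlocks (τ • A) X X (-(τ • B))).map ((↑) : ℝ → ℂ)
      = fromBlocks (τ • A.map (↑)) (X.map (↑)) (X.map (↑)) (-(τ • B.map (↑))) := by
  have hsmul (a : ℝ) : ((τ • a : ℝ) : ℂ) = τ • (a : ℂ) :=
    (Complex.ofReal_mul τ a).trans Complex.real_smul.symm
  rw [fromBlocks_map, Matrix.map_neg _ Complex.ofReal_neg, Matrix.map_smul _ _ hsmul,
    Matrix.map_smul _ _ hsmul]

lemma IsHermitian.star_star_dotProduct_mulVec [Fintype m] {R : Type*} [CommSemiring R]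
    [StarRing R] {M : Matrix m m R} (hM : M.IsHermitian) (u v : m → R) :
    star (star u ⬝ᵥ M *ᵥ v) = star v ⬝ᵥ M *ᵥ u := by
  rw [← star_dotProduct, star_mulVec, hM.eq, dotProduct_mulVec]

lemma IsHermitian.ofReal_re_star_dotProduct_mulVec_self [Fintype m] {A : Matrix m m ℂ}
    (hA : A.IsHermitian) (x : m → ℂ) : ((star x ⬝ᵥ A *ᵥ x).re : ℂ) = star x ⬝ᵥ A *ᵥ x :=
  Complex.conj_eq_iff_re.mp (hA.star_star_dotProduct_mulVec x x)

variable [Fintype m] {A B M N : Matrix m m ℂ} {τ : ℝ} {lam : ℂ} {v u : m → ℂ}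

lemma pairings_of_fromBlocks_mulVec_eq (hA : A.IsHermitian) (hB : B.IsHermitian)
    (hM : M.IsHermitian) (hN : N.IsHermitian)
    (heig : fromBlocks (τ • A) M M (-(τ • B)) *ᵥ Sum.elim v u
      = lam • fromBlocks (τ • A) N N (-(τ • B)) *ᵥ Sum.elim v u) :
    τ * (star v ⬝ᵥ A *ᵥ v).re + starRingEnd ℂ (star u ⬝ᵥ M *ᵥ v)
        = lam * (τ * (star v ⬝ᵥ A *ᵥ v).re + starRingEnd ℂ (star u ⬝ᵥ N *ᵥ v)) ∧
      star u ⬝ᵥ M *ᵥ v - τ * (star u ⬝ᵥ B *ᵥ u).re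
        = lam * (star u ⬝ᵥ N *ᵥ v - τ * (star u ⬝ᵥ B *ᵥ u).re) := by
  rw [fromBlocks_mulVec, fromBlocks_mulVec] at heig
  have h₁ : (τ • A) *ᵥ v + M *ᵥ u = lam • ((τ • A) *ᵥ v + N *ᵥ u) :=
    funext fun i => by simpa using congrFun heig (Sum.inl i)
  have h₂ : M *ᵥ v - (τ • B) *ᵥ u = lam • (N *ᵥ v - (τ • B) *ᵥ u) :=
    funext fun i => by simpa [sub_eq_add_neg, neg_mulVec] using congrFun heig (Sum.inr i)
  rw [hA.ofReal_re_star_dotProduct_mulVec_self, hB.ofReal_re_star_dotProduct_mulVec_self,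
    ← Complex.star_def, hM.star_star_dotProduct_mulVec, hN.star_star_dotProduct_mulVec]
  constructor
  · simpa [dotProduct_add, smul_mulVec, dotProduct_smul, mul_add] using congrArg (star v ⬝ᵥ ·) h₁
  · simpa [dotProduct_sub, smul_mulVec, dotProduct_smul, mul_sub] using congrArg (star u ⬝ᵥ ·) h₂

lemma re_star_dotProduct_mulVec_add_pos (hA : A.PosDef) (hB : B.PosDef)
    (hvu : Sum.elim v u ≠ 0) : 0 < (star v ⬝ᵥ A *ᵥ v).re + (star u ⬝ᵥ B *ᵥ u).re := by
  by_cases hv : v = 0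
  · have hu : u ≠ 0 := by rintro rfl; exact hvu (by rw [hv, Sum.elim_zero_zero])
    exact add_pos_of_nonneg_of_pos (hA.posSemidef.re_dotProduct_nonneg v)
      (hB.re_dotProduct_pos hu)
  · exact add_pos_of_pos_of_nonneg (hA.re_dotProduct_pos hv)
      (hB.posSemidef.re_dotProduct_nonneg u)

theorem norm_sub_one_sq_of_fromBlocks_mulVec_eq (hA : A.PosDef) (hB : B.PosDef)
    (hM : M.IsHermitian) (hN : N.IsHermitian) (hτ : 0 < τ) (hvu : Sum.elim v u ≠ 0)
    (heig : fromBlocks (τ • A) M M (-(τ • B)) *ᵥ Sum.elim v u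
      = lam • fromBlocks (τ • A) N N (-(τ • B)) *ᵥ Sum.elim v u) :
    ‖lam - 1‖ ^ 2 = 4 * (star u ⬝ᵥ (M - N) *ᵥ v).im ^ 2
      / ((τ * ((star v ⬝ᵥ A *ᵥ v).re + (star u ⬝ᵥ B *ᵥ u).re)) ^ 2
        + 4 * (star u ⬝ᵥ N *ᵥ v).im ^ 2) := by
  obtain ⟨h₁, h₂⟩ := pairings_of_fromBlocks_mulVec_eq hA.isHermitian hB.isHermitian hM hN heig
  have hα := mul_pos hτ (re_star_dotProduct_mulVec_add_pos hA hB hvu)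
  rw [eq_div_iff (by positivity), sub_mulVec, dotProduct_sub]
  exact Complex.norm_sub_one_sq_mul_eq h₁ h₂

end Matrix

/-- Eigenvalue identity for the mass-lumping preconditioned generalized
eigenproblem: if `[[τA, M],[M, −τB]](v,u) = λ [[τA, M̄],[M̄, −τB]](v,u)` with
`(v,u) ≠ 0`, then
`|λ−1|² = 4 Im((δM)v,u)² / (α² + 4 Im(M̄v,u)²)` with
`α = τ((Av,v)+(Bu,u))` and `δM = M − M̄`. -/
theorem stmt_8 {n : ℕ} (A B M Mbar : Matrix (Fin n) (Fin n) ℝ)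
    (hA : A.PosDef) (hB : B.PosDef)
    (hM : M.PosSemidef) (hMbar : Mbar.PosSemidef)
    (τ : ℝ) (hτ : 0 < τ)
    (lam : ℂ) (v u : Fin n → ℂ) (hvu : Sum.elim v u ≠ 0)
    (heig :
      ((Matrix.fromBlocks (τ • A) M M (-(τ • B))).map
          ((↑) : ℝ → ℂ)).mulVec (Sum.elim v u)
        = lam • ((Matrix.fromBlocks (τ • A) Mbar Mbar (-(τ • B))).map
            ((↑) : ℝ → ℂ)).mulVec (Sum.elim v u))
    (α : ℝ)
    (hα : α = τ * ((star v ⬝ᵥ (A.map ((↑) : ℝ → ℂ)).mulVec v).re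
        + (star u ⬝ᵥ (B.map ((↑) : ℝ → ℂ)).mulVec u).re)) :
    ‖lam - 1‖ ^ 2
      = 4 * ((star u ⬝ᵥ ((M - Mbar).map ((↑) : ℝ → ℂ)).mulVec v).im) ^ 2
        / (α ^ 2 + 4 * ((star u ⬝ᵥ (Mbar.map ((↑) : ℝ → ℂ)).mulVec v).im) ^ 2) := by
  rw [fromBlocks_map_ofReal, fromBlocks_map_ofReal] at heig
  rw [hα, Matrix.map_sub _ Complex.ofReal_sub]
  exact norm_sub_one_sq_of_fromBlocks_mulVec_eq hA.map_ofReal_s8 hB.map_ofReal_s8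
    hM.isHermitian.map_ofReal_s8 hMbar.isHermitian.map_ofReal_s8 hτ hvu heig
end

section
/- Let A be invertible, B, M, M̄ matrices with M̄, B and M invertible, τ > 0, and suppose all required inverses exist. Then (τA)⁻¹ M (τB + M̄(τA)⁻¹M)⁻¹ (M − M̄) = (I + τ² M̄⁻¹ B M⁻¹ A)⁻¹ (M̄⁻¹M − I). -/
open Matrix

/-- Simplification of the matrix `X`:
`(τA)⁻¹M(τB + M̄(τA)⁻¹M)⁻¹(M − M̄) = (I + τ²M̄⁻¹BM⁻¹A)⁻¹(M̄⁻¹M − I)`. -/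
theorem stmt_14 {n : ℕ} (A B M Mbar : Matrix (Fin n) (Fin n) ℝ)
    (hA : IsUnit A.det) (hB : IsUnit B.det)
    (hM : IsUnit M.det) (hMbar : IsUnit Mbar.det)
    (τ : ℝ) (hτ : 0 < τ)
    (hS : IsUnit (τ • B + Mbar * (τ • A)⁻¹ * M).det)
    (hI : IsUnit (1 + τ ^ 2 • ((A⁻¹ * M * B⁻¹ * Mbar)⁻¹)).det) :
    (τ • A)⁻¹ * M * (τ • B + Mbar * (τ • A)⁻¹ * M)⁻¹ * (M - Mbar)
      = (1 + τ ^ 2 • (Mbar⁻¹ * B * M⁻¹ * A))⁻¹ * (Mbar⁻¹ * M - 1) := by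
  haveI : Invertible τ := invertibleOfNonzero hτ.ne'
  have cA : A * A⁻¹ = 1 := Matrix.mul_nonsing_inv _ hA
  have cM : M⁻¹ * M = 1 := Matrix.nonsing_inv_mul _ hM
  have cMb : Mbar⁻¹ * Mbar = 1 := Matrix.nonsing_inv_mul _ hMbar
  have hτA : (τ • A)⁻¹ = τ⁻¹ • A⁻¹ := by
    rw [Matrix.inv_smul A τ hA, invOf_eq_inv]
  -- simplify the inverse in hI
  have hrev : (A⁻¹ * M * B⁻¹ * Mbar)⁻¹ = Mbar⁻¹ * B * M⁻¹ * A := by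
    rw [Matrix.mul_inv_rev, Matrix.mul_inv_rev, Matrix.mul_inv_rev,
      Matrix.nonsing_inv_nonsing_inv _ hA, Matrix.nonsing_inv_nonsing_inv _ hB]
    noncomm_ring
  rw [hrev] at hI
  set T : Matrix (Fin n) (Fin n) ℝ := 1 + τ ^ 2 • (Mbar⁻¹ * B * M⁻¹ * A) with hT
  set S : Matrix (Fin n) (Fin n) ℝ := τ • B + Mbar * (τ • A)⁻¹ * M with hSdef
  have key : T * ((τ • A)⁻¹ * M) = Mbar⁻¹ * S := by
    rw [hT, hSdef, hτA]
    simp only [Matrix.smul_mul, Matrix.mul_smul, smul_smul, add_mul, mul_add, one_mul]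
    have e1 : Mbar⁻¹ * B * M⁻¹ * A * (A⁻¹ * M) = Mbar⁻¹ * B := by
      rw [show Mbar⁻¹ * B * M⁻¹ * A * (A⁻¹ * M)
            = Mbar⁻¹ * B * (M⁻¹ * (A * A⁻¹ * M)) by noncomm_ring,
        cA, one_mul, cM, mul_one]
    have e2 : Mbar⁻¹ * (Mbar * A⁻¹ * M) = A⁻¹ * M := by
      rw [show Mbar⁻¹ * (Mbar * A⁻¹ * M) = Mbar⁻¹ * Mbar * (A⁻¹ * M) by noncomm_ring,
        cMb, one_mul]
    have hττ : τ⁻¹ * τ ^ 2 = τ := by field_simp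
    rw [e1, hττ, e2]
    exact add_comm _ _
  have hX : (τ • A)⁻¹ * M = T⁻¹ * (Mbar⁻¹ * S) := by
    rw [← key, ← mul_assoc, Matrix.nonsing_inv_mul _ hI, one_mul]
  rw [hX, mul_assoc T⁻¹ (Mbar⁻¹ * S) S⁻¹, mul_assoc Mbar⁻¹ S S⁻¹,
    Matrix.mul_nonsing_inv _ hS, mul_one, mul_assoc, Matrix.mul_sub, cMb]
end
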